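/- arXiv:2307.08890 — 3 statements merged into one kernel-verified Lean document; each statement's English description precedes it below -/
import Mathlib

section
/- Let Z be the minimum of n independent uniform [0,1] random variables, and let L be a nonnegative random variable such that for every z in (0,1], E[L | Z = z] <= min{T, 1/z}. Then E[L] <= 1 + n * ln(T). -/
/-!
Write `p(z) = n (1 - z)^(n-1)` for the density of `Z` and `m(z) = min T (1/z)`.
Since `m ≥ 1` and `0 ≤ (1 - z)^(n-1) ≤ 1` on `(0,1]`,
`g p ≤ m p = p + n (m - 1) (1 - z)^(n-1) ≤ p + n (m - 1)`,
and the right-hand side integrates to `1 + n ∫₀¹ (m - 1) = 1 + n log T`.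
-/

open MeasureTheory ProbabilityTheory Set

theorem integral_one_sub_pow (k : ℕ) : ∫ z in (0:ℝ)..1, (1 - z) ^ k = 1 / (k + 1) := by
  simpa using intervalIntegral.integral_comp_sub_left (fun z : ℝ => z ^ k) (a := 0) (b := 1) 1

theorem integral_Ioc_natCast_mul_one_sub_pow_pred {n : ℕ} (hn : 0 < n) :
    ∫ z in Ioc (0:ℝ) 1, n * (1 - z) ^ (n - 1) = 1 := by
  obtain ⟨k, rfl⟩ := Nat.exists_eq_add_of_lt hn
  rw [← intervalIntegral.integral_of_le zero_le_one, intervalIntegral.integral_const_mul]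
  simp only [zero_add, add_tsub_cancel_right, integral_one_sub_pow]
  push_cast
  field_simp

theorem integrableOn_min_one_div (T : ℝ) :
    IntegrableOn (fun z : ℝ => min T (1 / z)) (Ioc 0 1) := by
  refine Measure.integrableOn_of_bounded (M := |T| + 1) measure_Ioc_lt_top.ne
    (by fun_prop) ?_
  filter_upwards [ae_restrict_mem measurableSet_Ioc] with z ⟨hz₀, hz₁⟩
  have : 0 ≤ 1 / z := by positivity
  exact abs_le.2 ⟨le_min (by linarith [neg_abs_le T]) (by linarith [abs_nonneg T]),
    (min_le_left _ _).trans (by linarith [le_abs_self T])⟩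

theorem integral_min_one_div_sub_one {T : ℝ} (hT : 1 ≤ T) :
    ∫ z in Ioc (0:ℝ) 1, (min T (1 / z) - 1) = Real.log T := by
  have hT₀ : 0 < T := by linarith
  have hTinv : T⁻¹ ∈ uIcc (0:ℝ) 1 := by
    rw [uIcc_of_le zero_le_one]; exact ⟨by positivity, inv_le_one_of_one_le₀ hT⟩
  have hint : IntervalIntegrable (fun z : ℝ => min T (1 / z) - 1) volume 0 1 :=
    (intervalIntegrable_iff_integrableOn_Ioc_of_le zero_le_one).2
      ((integrableOn_min_one_div T).sub (integrableOn_const measure_Ioc_lt_top.ne))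
  have hsmall : ∫ z in (0:ℝ)..T⁻¹, (min T (1 / z) - 1) = 1 - T⁻¹ := by
    rw [intervalIntegral.integral_congr_ae (g := fun _ => T - 1) (ae_of_all _ fun z hz => ?_),
      intervalIntegral.integral_const, smul_eq_mul]
    · field_simp; ring
    rw [uIoc_of_le (by positivity)] at hz
    rw [one_div, min_eq_left ((le_inv_comm₀ hz.1 hT₀).1 hz.2)]
  have hlarge : ∫ z in T⁻¹..1, (min T (1 / z) - 1) = Real.log T - (1 - T⁻¹) := by
    have h0 : (0:ℝ) ∉ uIcc T⁻¹ 1 := fun h => by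
      rw [uIcc_of_le (inv_le_one_of_one_le₀ hT)] at h; linarith [inv_pos.2 hT₀, h.1]
    rw [intervalIntegral.integral_congr (g := fun z => 1 / z - 1) fun z hz => ?_,
      intervalIntegral.integral_sub, integral_one_div h0, intervalIntegral.integral_const]
    · simp
    · exact intervalIntegral.intervalIntegrable_one_div (fun z hz h => h0 (h ▸ hz))
        continuousOn_id
    · exact intervalIntegrable_const
    rw [uIcc_of_le (inv_le_one_of_one_le₀ hT)] at hz
    have hz₀ : 0 < z := (inv_pos.2 hT₀).trans_le hz.1
    rw [min_eq_right (by rw [one_div]; exact (inv_le_comm₀ hT₀ hz₀).1 hz.1)]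
  rw [← intervalIntegral.integral_of_le zero_le_one,
    ← intervalIntegral.integral_add_adjacent_intervals
      (hint.mono_set (uIcc_subset_uIcc left_mem_uIcc hTinv))
      (hint.mono_set (uIcc_subset_uIcc hTinv right_mem_uIcc)),
    hsmall, hlarge]
  ring

theorem mul_natCast_mul_one_sub_pow_le {T y z : ℝ} (n k : ℕ) (hT : 1 ≤ T) (hz : z ∈ Ioc (0:ℝ) 1)
    (hy : y ≤ min T (1 / z)) :
    y * (n * (1 - z) ^ k) ≤ n * (1 - z) ^ k + n * (min T (1 / z) - 1) := by
  have hq₀ : 0 ≤ (1 - z) ^ k := pow_nonneg (by linarith [hz.2]) k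
  have hq₁ : (1 - z) ^ k ≤ 1 := pow_le_one₀ (by linarith [hz.2]) (by linarith [hz.1])
  have hm : 1 ≤ min T (1 / z) := le_min hT (by rw [le_div_iff₀ hz.1]; linarith [hz.2])
  have hn : (0:ℝ) ≤ n := n.cast_nonneg
  calc y * (n * (1 - z) ^ k) ≤ min T (1 / z) * (n * (1 - z) ^ k) := by gcongr
    _ = n * (1 - z) ^ k + n * (min T (1 / z) - 1) * (1 - z) ^ k := by ring
    _ ≤ n * (1 - z) ^ k + n * (min T (1 / z) - 1) := by
      have := mul_le_of_le_one_right (mul_nonneg hn (sub_nonneg.2 hm)) hq₁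
      linarith

theorem expected_L_le_one_add_n_log_general {Ω : Type*} [MeasureSpace Ω]
    (T n : ℕ) (hT : 1 ≤ T) (hn : 0 < n)
    (L : Ω → ℝ)
    (g : ℝ → ℝ)
    (hEL : ∫ ω : Ω, L ω ∂ℙ = ∫ z in Set.Ioc (0:ℝ) 1, g z * (n * (1 - z) ^ (n - 1)))
    (hg : ∀ z ∈ Set.Ioc (0:ℝ) 1, g z ≤ min (T : ℝ) (1 / z)) :
    ∫ ω : Ω, L ω ∂ℙ ≤ 1 + n * Real.log T := by
  have hT' : (1:ℝ) ≤ T := by exact_mod_cast hT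
  rw [hEL]
  by_cases hint : IntegrableOn (fun z => g z * (n * (1 - z) ^ (n - 1))) (Ioc 0 1)
  · have hpdf : IntegrableOn (fun z : ℝ => n * (1 - z) ^ (n - 1)) (Ioc 0 1) :=
      (continuous_const.mul ((continuous_const.sub continuous_id).pow _)).integrableOn_Ioc
    have hexcess : IntegrableOn (fun z => n * (min (T:ℝ) (1 / z) - 1)) (Ioc 0 1) :=
      ((integrableOn_min_one_div T).sub (integrableOn_const measure_Ioc_lt_top.ne)).const_mul _
    calc ∫ z in Ioc 0 1, g z * (n * (1 - z) ^ (n - 1))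
        ≤ ∫ z in Ioc 0 1, (n * (1 - z) ^ (n - 1) + n * (min (T:ℝ) (1 / z) - 1)) :=
          setIntegral_mono_on hint (hpdf.add hexcess) measurableSet_Ioc fun z hz =>
            mul_natCast_mul_one_sub_pow_le n (n - 1) hT' hz (hg z hz)
      _ = 1 + n * Real.log T := by
        rw [integral_add hpdf hexcess, integral_Ioc_natCast_mul_one_sub_pow_pred hn,
          integral_const_mul, integral_min_one_div_sub_one hT']
  · rw [integral_undef hint]
    have := Real.log_natCast_nonneg T
    positivity

/-- Let `Z` be the minimum of `n` independent uniform `[0,1]` random variables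
(whose PDF is `p_Z(z) = n (1-z)^(n-1)`), and let `L` be a nonnegative random variable such that
`E[L | Z = z] ≤ min {T, 1/z}` for every `z ∈ (0,1]`.  Then `E[L] ≤ 1 + n * ln T`.
Here `g z` denotes the conditional expectation `E[L | Z = z]`, so that
`E[L] = ∫ g z * p_Z z dz`. -/
theorem expected_L_le_one_add_n_log {Ω : Type*} [MeasureSpace Ω]
    [IsProbabilityMeasure (ℙ : Measure Ω)]
    (T n : ℕ) (hT : 1 ≤ T) (hn : 0 < n)
    (L : Ω → ℝ) (hL0 : ∀ ω, 0 ≤ L ω)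
    (g : ℝ → ℝ) (hg0 : ∀ z, 0 ≤ g z)
    (hEL : ∫ ω : Ω, L ω ∂ℙ = ∫ z in Set.Ioc (0:ℝ) 1, g z * (n * (1 - z) ^ (n - 1)))
    (hg : ∀ z ∈ Set.Ioc (0:ℝ) 1, g z ≤ min (T : ℝ) (1 / z)) :
    ∫ ω : Ω, L ω ∂ℙ ≤ 1 + n * Real.log T :=
  expected_L_le_one_add_n_log_general T n hT hn L g hEL hg
end

section
/- Consider a random binary partition-tree over the sequence [1, T], where each internal window of size S is split by choosing one of its S-1 internal dividers uniformly at random, independently for each window. For any two days t_1 < t_2 in [T], the expected size of the smallest window strictly containing both t_1 and t_2 is at most (t_2 - t_1 + 1) + 2(t_2 - t_1 + 2) * ln(T), which is O((t_2 - t_1) * log T). -/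
open MeasureTheory
open scoped ENNReal NNReal

/-- A (binary) partition-tree: a leaf holds a single day, an internal node holds the
endpoints `s`, `e` of its window together with its two children. -/
inductive PTree : Type
  | leaf : ℕ → PTree
  | node : ℕ → ℕ → PTree → PTree → PTree

instance : MeasurableSpace PTree := ⊤

/-- First day of the window associated to a tree. -/
def PTree.lo : PTree → ℕ
  | .leaf d => d
  | .node s _ _ _ => s

/-- Last day of the window associated to a tree. -/
def PTree.hi : PTree → ℕ
  | .leaf d => d
  | .node _ e _ _ => e

/-- The random partition-tree over the window `[s, e]`: every internal window is split by
choosing one of its internal dividers uniformly at random, independently for each window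
(a divider `d ∈ [s, e)` splits `[s, e]` into `[s, d]` and `[d+1, e]`).  The first argument
is fuel, used to justify the recursion; `splitPMF` instantiates it with the window size. -/
noncomputable def splitPMFAux : ℕ → ℕ → ℕ → PMF PTree
  | 0, s, _ => PMF.pure (PTree.leaf s)
  | fuel + 1, s, e =>
    if h : s < e then
      (PMF.uniformOfFinset (Finset.Ico s e) (Finset.nonempty_Ico.mpr h)).bind fun d =>
        (splitPMFAux fuel s d).bind fun l =>
          (splitPMFAux fuel (d + 1) e).map (PTree.node s e l)
    else PMF.pure (PTree.leaf s)

/-- The distribution of the random partition-tree over the window `[s, e]`. -/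
noncomputable def splitPMF (s e : ℕ) : PMF PTree := splitPMFAux (e - s) s e

/-- The size of the smallest window of the tree containing both days `t₁` and `t₂`
(for `t₁ < t₂` this window strictly contains them). -/
def winSize (t₁ t₂ : ℕ) : PTree → ℕ
  | .leaf _ => 1
  | .node s e l r =>
    if t₂ ≤ l.hi then winSize t₁ t₂ l
    else if r.lo ≤ t₁ then winSize t₁ t₂ r
    else e - s + 1

/-! ### Countability and measurability infrastructure -/

def PTree.enc : PTree → ℕ
  | .leaf d => 2 * d
  | .node s e l r => 2 * (Nat.pair s (Nat.pair e (Nat.pair l.enc r.enc))) + 1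

lemma PTree.enc_inj : ∀ a b : PTree, a.enc = b.enc → a = b := by
  intro a
  induction a with
  | leaf d =>
    intro b; cases b <;> simp [PTree.enc] <;> omega
  | node s e l r ihl ihr =>
    intro b; cases b with
    | leaf d => simp [PTree.enc]; omega
    | node s' e' l' r' =>
      simp only [PTree.enc]
      intro h
      have h2 : Nat.pair s (Nat.pair e (Nat.pair l.enc r.enc)) =
          Nat.pair s' (Nat.pair e' (Nat.pair l'.enc r'.enc)) := by omega
      simp only [Nat.pair_eq_pair] at h2
      obtain ⟨rfl, rfl, h3, h4⟩ := h2
      simp only [PTree.node.injEq]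
      exact ⟨trivial, trivial, ihl _ h3, ihr _ h4⟩

instance : Countable PTree := ⟨⟨PTree.enc, PTree.enc_inj⟩⟩

instance : MeasurableSingletonClass PTree := ⟨fun _ => trivial⟩

/-! ### Expectations of `ℝ≥0∞`-valued functions against a `PMF` -/

noncomputable def pexp {α : Type*} (p : PMF α) (f : α → ℝ≥0∞) : ℝ≥0∞ := ∑' a, p a * f a

lemma pexp_pure {α : Type*} (a : α) (f : α → ℝ≥0∞) : pexp (PMF.pure a) f = f a := by
  unfold pexp
  rw [tsum_eq_single a]
  · simp [PMF.pure_apply]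
  · intro b hb; simp [PMF.pure_apply, hb]

lemma pexp_bind {α β : Type*} (p : PMF α) (g : α → PMF β) (f : β → ℝ≥0∞) :
    pexp (p.bind g) f = pexp p (fun a => pexp (g a) f) := by
  unfold pexp
  simp only [PMF.bind_apply]
  have h1 : ∀ b, (∑' a, p a * (g a) b) * f b = ∑' a, p a * ((g a) b * f b) := by
    intro b; rw [← ENNReal.tsum_mul_right]; simp only [mul_assoc]
  simp only [h1]
  rw [ENNReal.tsum_comm]
  simp only [ENNReal.tsum_mul_left]

lemma pexp_map {α β : Type*} (p : PMF α) (h : α → β) (f : β → ℝ≥0∞) :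
    pexp (p.map h) f = pexp p (fun a => f (h a)) := by
  unfold PMF.map
  rw [pexp_bind]
  simp [pexp_pure]

lemma pexp_congr {α : Type*} (p : PMF α) (f g : α → ℝ≥0∞)
    (h : ∀ a ∈ p.support, f a = g a) : pexp p f = pexp p g := by
  unfold pexp
  congr 1; ext a
  by_cases ha : a ∈ p.support
  · rw [h a ha]
  · simp only [PMF.mem_support_iff, not_not] at ha
    simp [ha]

lemma pexp_const {α : Type*} (p : PMF α) (c : ℝ≥0∞) : pexp p (fun _ => c) = c := by
  unfold pexp
  rw [ENNReal.tsum_mul_right, PMF.tsum_coe, one_mul]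

lemma pexp_uniformOfFinset {α : Type*} (s : Finset α) (hs : s.Nonempty) (f : α → ℝ≥0∞) :
    pexp (PMF.uniformOfFinset s hs) f = ∑ a ∈ s, (s.card : ℝ≥0∞)⁻¹ * f a := by
  unfold pexp
  rw [tsum_eq_sum (s := s)]
  · apply Finset.sum_congr rfl
    intro a ha
    rw [PMF.uniformOfFinset_apply, if_pos ha]
  · intro b hb
    rw [PMF.uniformOfFinset_apply, if_neg hb, zero_mul]

lemma lintegral_pexp {α : Type*} [MeasurableSpace α] [Countable α] [MeasurableSingletonClass α]
    (p : PMF α) (f : α → ℝ≥0∞) : ∫⁻ a, f a ∂p.toMeasure = pexp p f := by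
  rw [MeasureTheory.lintegral_countable' f]
  unfold pexp
  congr 1; ext a
  rw [p.toMeasure_apply_singleton a (MeasurableSet.singleton a), mul_comm]

lemma integral_le_of_pexp_le {α : Type*} [MeasurableSpace α] [Countable α]
    [MeasurableSingletonClass α] (p : PMF α) (f : α → ℕ) {B : ℝ} (hB : 0 ≤ B)
    (h : pexp p (fun a => (f a : ℝ≥0∞)) ≤ ENNReal.ofReal B) :
    ∫ a, (f a : ℝ) ∂p.toMeasure ≤ B := by
  rw [MeasureTheory.integral_eq_lintegral_of_nonneg_ae]
  · apply ENNReal.toReal_le_of_le_ofReal hB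
    calc ∫⁻ a, ENNReal.ofReal ((f a : ℝ)) ∂p.toMeasure
        = ∫⁻ a, ((f a : ℕ) : ℝ≥0∞) ∂p.toMeasure := by
          congr 1; ext a; rw [ENNReal.ofReal_natCast]
      _ = pexp p (fun a => (f a : ℝ≥0∞)) := lintegral_pexp p _
      _ ≤ ENNReal.ofReal B := h
  · exact Filter.Eventually.of_forall (fun a => Nat.cast_nonneg _)
  · exact (measurable_of_countable _).stronglyMeasurable.aestronglyMeasurable

/-! ### Analytic lemmas -/

noncomputable def logFac (p : ℕ) : ℝ := ∑ i ∈ Finset.range p, Real.log ((i : ℝ) + 1)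

lemma one_le_cast_add_one (i : ℕ) : (1:ℝ) ≤ (i:ℝ) + 1 := by
  have : (0:ℝ) ≤ (i:ℝ) := Nat.cast_nonneg i
  linarith

lemma logFac_nonneg (p : ℕ) : 0 ≤ logFac p :=
  Finset.sum_nonneg fun i _ => Real.log_nonneg (one_le_cast_add_one i)

lemma logFac_le (p : ℕ) : logFac p ≤ ((p : ℝ) + 1) * Real.log ((p : ℝ) + 1) - p := by
  induction p with
  | zero => simp [logFac]
  | succ p ih =>
    have hstep : Real.log ((p : ℝ) + 2) - Real.log ((p : ℝ) + 1) ≥ 1 / ((p : ℝ) + 2) := by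
      have h1 : (0:ℝ) < (p : ℝ) + 1 := by positivity
      have h2 : (0:ℝ) < (p : ℝ) + 2 := by positivity
      have := Real.log_le_sub_one_of_pos (x := ((p : ℝ) + 1) / ((p : ℝ) + 2)) (by positivity)
      rw [Real.log_div (by positivity) (by positivity)] at this
      rw [div_sub_one (by positivity)] at this
      have h3 : ((p:ℝ) + 1 - ((p:ℝ) + 2)) / ((p:ℝ) + 2) = -(1 / ((p:ℝ)+2)) := by ring
      rw [h3] at this
      linarith
    have hrec : logFac (p + 1) = logFac p + Real.log ((p : ℝ) + 1) := by
      rw [logFac, Finset.sum_range_succ]; rfl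
    push_cast
    rw [hrec]
    have e1 : (p:ℝ)+1+1 = (p:ℝ)+2 := by ring
    rw [e1]
    have hp2 : (0:ℝ) < (p : ℝ) + 2 := by positivity
    have key : ((p:ℝ) + 2) * (Real.log ((p:ℝ)+2) - Real.log ((p:ℝ)+1)) ≥ 1 := by
      calc (1:ℝ) = ((p:ℝ)+2) * (1/((p:ℝ)+2)) := by field_simp
        _ ≤ ((p:ℝ)+2) * (Real.log ((p:ℝ)+2) - Real.log ((p:ℝ)+1)) :=
            mul_le_mul_of_nonneg_left hstep (le_of_lt hp2)
    linarith [ih, key]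

lemma core_key (Δ m : ℕ) (hΔ : 1 ≤ Δ) :
    (Δ : ℝ) * m ≤ ((Δ : ℝ) + 2) * (((m : ℝ) + Δ) * Real.log ((m : ℝ) + 1) - logFac m) := by
  have hL : 0 ≤ Real.log ((m : ℝ) + 1) := Real.log_nonneg (one_le_cast_add_one m)
  have h1 : ((m:ℝ) + Δ) * Real.log ((m : ℝ) + 1) - logFac m ≥ (m : ℝ) := by
    have := logFac_le m
    have hΔ' : (1:ℝ) ≤ (Δ:ℝ) := by exact_mod_cast hΔ
    nlinarith
  have hΔ2 : (Δ:ℝ) ≤ (Δ:ℝ) + 2 := by linarith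
  calc (Δ : ℝ) * m ≤ ((Δ:ℝ) + 2) * m := by
        have : (0:ℝ) ≤ (m:ℝ) := Nat.cast_nonneg m
        nlinarith
    _ ≤ ((Δ : ℝ) + 2) * (((m : ℝ) + Δ) * Real.log ((m : ℝ) + 1) - logFac m) := by
        apply mul_le_mul_of_nonneg_left h1 (by positivity)

lemma core (p q Δ : ℕ) (hΔ : 1 ≤ Δ) :
    (Δ:ℝ)*((p:ℝ)+q+Δ+1)
      + ((p:ℝ)*((Δ:ℝ)+1) + ((Δ:ℝ)+2)*(logFac p + (p:ℝ)*Real.log ((q:ℝ)+1)))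
      + ((q:ℝ)*((Δ:ℝ)+1) + ((Δ:ℝ)+2)*(logFac q + (q:ℝ)*Real.log ((p:ℝ)+1)))
    ≤ ((p:ℝ)+q+Δ) * (((Δ:ℝ)+1) + ((Δ:ℝ)+2)*(Real.log ((p:ℝ)+1) + Real.log ((q:ℝ)+1))) := by
  have kp := core_key Δ p hΔ
  have kq := core_key Δ q hΔ
  nlinarith [kp, kq]

lemma sum_log_reflect (a b : ℕ) (hab : a ≤ b) :
    ∑ d ∈ Finset.Ico a b, Real.log ((b:ℝ) - d) = logFac (b - a) := by
  rw [logFac]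
  apply Finset.sum_nbij' (i := fun d => b - 1 - d) (j := fun i => b - 1 - i)
  · intro d hd; simp only [Finset.mem_Ico] at hd; simp only [Finset.mem_range]; omega
  · intro i hi; simp only [Finset.mem_range] at hi; simp only [Finset.mem_Ico]; omega
  · intro d hd; simp only [Finset.mem_Ico] at hd; omega
  · intro i hi; simp only [Finset.mem_range] at hi; omega
  · intro d hd
    simp only [Finset.mem_Ico] at hd
    congr 1
    have h1 : b - 1 - d + 1 = b - d := by omega
    have h2 : ((b - 1 - d : ℕ) : ℝ) + 1 = ((b - d : ℕ) : ℝ) := by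
      exact_mod_cast congrArg (Nat.cast (R := ℝ)) h1
    rw [h2, Nat.cast_sub (by omega)]

lemma sum_log_shift (a b : ℕ) :
    ∑ d ∈ Finset.Ico a b, Real.log ((d:ℝ) - a + 1) = logFac (b - a) := by
  rw [logFac]
  apply Finset.sum_nbij' (i := fun d => d - a) (j := fun i => a + i)
  · intro d hd; simp only [Finset.mem_Ico] at hd; simp only [Finset.mem_range]; omega
  · intro i hi; simp only [Finset.mem_range] at hi; simp only [Finset.mem_Ico]; omega
  · intro d hd; simp only [Finset.mem_Ico] at hd; omega
  · intro i hi; simp only [Finset.mem_range] at hi; omega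
  · intro d hd
    simp only [Finset.mem_Ico] at hd
    congr 1
    rw [Nat.cast_sub (by omega)]

/-! ### The bound function -/

noncomputable def wB (t₁ t₂ s e : ℕ) : ℝ :=
  ((t₂:ℝ) - t₁ + 1) + ((t₂:ℝ) - t₁ + 2) *
    (Real.log ((t₁:ℝ) - s + 1) + Real.log ((e:ℝ) - t₂ + 1))

lemma wB_nonneg (t₁ t₂ s e : ℕ) (hs : s ≤ t₁) (h12 : t₁ ≤ t₂) (he : t₂ ≤ e) :
    0 ≤ wB t₁ t₂ s e := by
  have hD : (0:ℝ) ≤ (t₂:ℝ) - t₁ := by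
    have : (t₁:ℝ) ≤ t₂ := by exact_mod_cast h12
    linarith
  have hl1 : (0:ℝ) ≤ Real.log ((t₁:ℝ) - s + 1) := by
    apply Real.log_nonneg
    have : (s:ℝ) ≤ t₁ := by exact_mod_cast hs
    linarith
  have hl2 : (0:ℝ) ≤ Real.log ((e:ℝ) - t₂ + 1) := by
    apply Real.log_nonneg
    have : (t₂:ℝ) ≤ e := by exact_mod_cast he
    linarith
  have : (0:ℝ) ≤ ((t₂:ℝ) - t₁ + 2) * (Real.log ((t₁:ℝ) - s + 1) + Real.log ((e:ℝ) - t₂ + 1)) := by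
    apply mul_nonneg <;> linarith
  rw [wB]; linarith

lemma sum_Bd (s e t₁ t₂ : ℕ) (hs : s ≤ t₁) (h12 : t₁ < t₂) (he : t₂ ≤ e) :
    ∑ d ∈ Finset.Ico s e,
      (if t₂ ≤ d then wB t₁ t₂ s d else if d < t₁ then wB t₁ t₂ (d+1) e else ((e:ℝ) - s + 1))
    ≤ ((e:ℝ) - s) * wB t₁ t₂ s e := by
  rw [← Finset.sum_Ico_consecutive _ (show s ≤ t₁ by omega) (show t₁ ≤ e by omega)]
  rw [← Finset.sum_Ico_consecutive _ (show t₁ ≤ t₂ by omega) (show t₂ ≤ e by omega)]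
  have h1 : ∀ d ∈ Finset.Ico s t₁,
      (if t₂ ≤ d then wB t₁ t₂ s d else if d < t₁ then wB t₁ t₂ (d+1) e else ((e:ℝ) - s + 1))
      = (((t₂:ℝ) - t₁ + 1) + ((t₂:ℝ) - t₁ + 2) * Real.log ((e:ℝ) - t₂ + 1))
        + ((t₂:ℝ) - t₁ + 2) * Real.log ((t₁:ℝ) - d) := by
    intro d hd
    simp only [Finset.mem_Ico] at hd
    rw [if_neg (by omega), if_pos (by omega : d < t₁)]
    rw [wB]
    have : (t₁:ℝ) - ((d+1 : ℕ):ℝ) + 1 = (t₁:ℝ) - d := by push_cast; ring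
    rw [this]; ring
  have h2 : ∀ d ∈ Finset.Ico t₁ t₂,
      (if t₂ ≤ d then wB t₁ t₂ s d else if d < t₁ then wB t₁ t₂ (d+1) e else ((e:ℝ) - s + 1))
      = ((e:ℝ) - s + 1) := by
    intro d hd
    simp only [Finset.mem_Ico] at hd
    rw [if_neg (by omega), if_neg (by omega)]
  have h3 : ∀ d ∈ Finset.Ico t₂ e,
      (if t₂ ≤ d then wB t₁ t₂ s d else if d < t₁ then wB t₁ t₂ (d+1) e else ((e:ℝ) - s + 1))
      = (((t₂:ℝ) - t₁ + 1) + ((t₂:ℝ) - t₁ + 2) * Real.log ((t₁:ℝ) - s + 1))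
        + ((t₂:ℝ) - t₁ + 2) * Real.log ((d:ℝ) - t₂ + 1) := by
    intro d hd
    simp only [Finset.mem_Ico] at hd
    rw [if_pos (by omega : t₂ ≤ d), wB]
    ring
  have S1 : ∑ d ∈ Finset.Ico s t₁,
      (if t₂ ≤ d then wB t₁ t₂ s d else if d < t₁ then wB t₁ t₂ (d+1) e else ((e:ℝ) - s + 1))
      = ((t₁ - s : ℕ):ℝ) * (((t₂:ℝ) - t₁ + 1) + ((t₂:ℝ) - t₁ + 2) * Real.log ((e:ℝ) - t₂ + 1))
        + ((t₂:ℝ) - t₁ + 2) * logFac (t₁ - s) := by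
    rw [Finset.sum_congr rfl h1, Finset.sum_add_distrib, Finset.sum_const, ← Finset.mul_sum,
      sum_log_reflect s t₁ hs, Nat.card_Ico, nsmul_eq_mul]
  have S2 : ∑ d ∈ Finset.Ico t₁ t₂,
      (if t₂ ≤ d then wB t₁ t₂ s d else if d < t₁ then wB t₁ t₂ (d+1) e else ((e:ℝ) - s + 1))
      = ((t₂ - t₁ : ℕ):ℝ) * ((e:ℝ) - s + 1) := by
    rw [Finset.sum_congr rfl h2, Finset.sum_const, Nat.card_Ico, nsmul_eq_mul]
  have S3 : ∑ d ∈ Finset.Ico t₂ e,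
      (if t₂ ≤ d then wB t₁ t₂ s d else if d < t₁ then wB t₁ t₂ (d+1) e else ((e:ℝ) - s + 1))
      = ((e - t₂ : ℕ):ℝ) * (((t₂:ℝ) - t₁ + 1) + ((t₂:ℝ) - t₁ + 2) * Real.log ((t₁:ℝ) - s + 1))
        + ((t₂:ℝ) - t₁ + 2) * logFac (e - t₂) := by
    rw [Finset.sum_congr rfl h3, Finset.sum_add_distrib, Finset.sum_const, ← Finset.mul_sum,
      sum_log_shift t₂ e, Nat.card_Ico, nsmul_eq_mul]
  rw [S1, S2, S3]
  have hp : ((t₁ - s : ℕ):ℝ) = (t₁:ℝ) - s := Nat.cast_sub hs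
  have hq : ((e - t₂ : ℕ):ℝ) = (e:ℝ) - t₂ := Nat.cast_sub he
  have hΔ : ((t₂ - t₁ : ℕ):ℝ) = (t₂:ℝ) - t₁ := Nat.cast_sub (le_of_lt h12)
  have hcore := core (t₁ - s) (e - t₂) (t₂ - t₁) (by omega)
  rw [hp, hq, hΔ] at hcore
  rw [wB]
  rw [hp, hq, hΔ]
  nlinarith [hcore]

/-! ### Support lemmas -/

lemma lo_mem : ∀ {fuel s e : ℕ} {x : PTree},
    x ∈ (splitPMFAux fuel s e).support → x.lo = s := by
  intro fuel s e x hx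
  cases fuel with
  | zero =>
    rw [splitPMFAux, PMF.mem_support_pure_iff] at hx
    subst hx; rfl
  | succ fuel =>
    rw [splitPMFAux] at hx
    by_cases h : s < e
    · rw [dif_pos h] at hx
      rw [PMF.mem_support_bind_iff] at hx
      obtain ⟨d, _, hx⟩ := hx
      rw [PMF.mem_support_bind_iff] at hx
      obtain ⟨l, _, hx⟩ := hx
      rw [PMF.mem_support_map_iff] at hx
      obtain ⟨r, _, rfl⟩ := hx
      rfl
    · rw [dif_neg h, PMF.mem_support_pure_iff] at hx
      subst hx; rfl

lemma hi_mem : ∀ {fuel s e : ℕ} {x : PTree}, s ≤ e → e - s ≤ fuel →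
    x ∈ (splitPMFAux fuel s e).support → x.hi = e := by
  intro fuel s e x hse hf hx
  cases fuel with
  | zero =>
    rw [splitPMFAux, PMF.mem_support_pure_iff] at hx
    subst hx
    show s = e
    omega
  | succ fuel =>
    rw [splitPMFAux] at hx
    by_cases h : s < e
    · rw [dif_pos h] at hx
      rw [PMF.mem_support_bind_iff] at hx
      obtain ⟨d, _, hx⟩ := hx
      rw [PMF.mem_support_bind_iff] at hx
      obtain ⟨l, _, hx⟩ := hx
      rw [PMF.mem_support_map_iff] at hx
      obtain ⟨r, _, rfl⟩ := hx
      rfl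
    · rw [dif_neg h, PMF.mem_support_pure_iff] at hx
      subst hx
      show s = e
      omega

lemma winSize_node (t₁ t₂ s e : ℕ) (l r : PTree) :
    winSize t₁ t₂ (PTree.node s e l r) =
      if t₂ ≤ l.hi then winSize t₁ t₂ l
      else if r.lo ≤ t₁ then winSize t₁ t₂ r
      else e - s + 1 := rfl

/-! ### The main induction -/

lemma main_bound (t₁ t₂ : ℕ) (h12 : t₁ < t₂) :
    ∀ fuel s e, s ≤ t₁ → t₂ ≤ e → e - s ≤ fuel →
    pexp (splitPMFAux fuel s e) (fun x => (winSize t₁ t₂ x : ℝ≥0∞)) ≤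
      ENNReal.ofReal (wB t₁ t₂ s e) := by
  intro fuel
  induction fuel with
  | zero => intro s e hs he hf; omega
  | succ fuel ih =>
    intro s e hs he hf
    have hse : s < e := by omega
    rw [splitPMFAux, dif_pos hse, pexp_bind, pexp_uniformOfFinset]
    have hd : ∀ d ∈ Finset.Ico s e,
        pexp ((splitPMFAux fuel s d).bind fun l =>
            (splitPMFAux fuel (d+1) e).map (PTree.node s e l))
          (fun x => (winSize t₁ t₂ x : ℝ≥0∞))
        ≤ ENNReal.ofReal
            (if t₂ ≤ d then wB t₁ t₂ s d else if d < t₁ then wB t₁ t₂ (d+1) e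
              else ((e:ℝ) - s + 1)) := by
      intro d hdmem
      simp only [Finset.mem_Ico] at hdmem
      obtain ⟨hsd, hde⟩ := hdmem
      rw [pexp_bind]
      by_cases h2d : t₂ ≤ d
      · rw [if_pos h2d]
        have key : ∀ l ∈ (splitPMFAux fuel s d).support,
            pexp ((splitPMFAux fuel (d+1) e).map (PTree.node s e l))
              (fun x => (winSize t₁ t₂ x : ℝ≥0∞)) = ((winSize t₁ t₂ l : ℕ) : ℝ≥0∞) := by
          intro l hl
          rw [pexp_map]
          have hhi : l.hi = d := hi_mem (by omega) (by omega) hl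
          have hw : ∀ r : PTree, winSize t₁ t₂ (PTree.node s e l r) = winSize t₁ t₂ l := by
            intro r
            rw [winSize_node, if_pos (by omega : t₂ ≤ l.hi)]
          simp only [hw]
          exact pexp_const _ _
        rw [pexp_congr _ _ _ key]
        exact ih s d hs h2d (by omega)
      · by_cases h1d : d < t₁
        · rw [if_neg h2d, if_pos h1d]
          have key : ∀ l ∈ (splitPMFAux fuel s d).support,
              pexp ((splitPMFAux fuel (d+1) e).map (PTree.node s e l))
                (fun x => (winSize t₁ t₂ x : ℝ≥0∞))
              = pexp (splitPMFAux fuel (d+1) e) (fun x => (winSize t₁ t₂ x : ℝ≥0∞)) := by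
            intro l hl
            rw [pexp_map]
            apply pexp_congr
            intro r hr
            have hhi : l.hi = d := hi_mem (by omega) (by omega) hl
            have hlo : r.lo = d + 1 := lo_mem hr
            rw [winSize_node, if_neg (by omega : ¬ t₂ ≤ l.hi),
              if_pos (by omega : r.lo ≤ t₁)]
          rw [pexp_congr _ _ _ key, pexp_const]
          exact ih (d+1) e (by omega) he (by omega)
        · rw [if_neg h2d, if_neg h1d]
          have key : ∀ l ∈ (splitPMFAux fuel s d).support,
              pexp ((splitPMFAux fuel (d+1) e).map (PTree.node s e l))
                (fun x => (winSize t₁ t₂ x : ℝ≥0∞)) = ((e - s + 1 : ℕ) : ℝ≥0∞) := by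
            intro l hl
            rw [pexp_map]
            have hhi : l.hi = d := hi_mem (by omega) (by omega) hl
            have hw : ∀ r ∈ (splitPMFAux fuel (d+1) e).support,
                ((winSize t₁ t₂ (PTree.node s e l r) : ℕ) : ℝ≥0∞) = ((e - s + 1 : ℕ) : ℝ≥0∞) := by
              intro r hr
              have hlo : r.lo = d + 1 := lo_mem hr
              rw [winSize_node, if_neg (by omega : ¬ t₂ ≤ l.hi),
                if_neg (by omega : ¬ r.lo ≤ t₁)]
            rw [pexp_congr _ _ _ hw]
            exact pexp_const _ _
          rw [pexp_congr _ _ _ key, pexp_const]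
          rw [← ENNReal.ofReal_natCast]
          apply ENNReal.ofReal_le_ofReal
          rw [Nat.cast_add, Nat.cast_sub (le_of_lt hse)]
          norm_num
    calc ∑ d ∈ Finset.Ico s e, ((Finset.Ico s e).card : ℝ≥0∞)⁻¹ *
            pexp ((splitPMFAux fuel s d).bind fun l =>
              (splitPMFAux fuel (d+1) e).map (PTree.node s e l))
              (fun x => (winSize t₁ t₂ x : ℝ≥0∞))
        ≤ ∑ d ∈ Finset.Ico s e, ((Finset.Ico s e).card : ℝ≥0∞)⁻¹ *
            ENNReal.ofReal (if t₂ ≤ d then wB t₁ t₂ s d else if d < t₁ then wB t₁ t₂ (d+1) e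
              else ((e:ℝ) - s + 1)) :=
          Finset.sum_le_sum (fun d hdm => mul_le_mul_right (hd d hdm) _)
      _ = ((Finset.Ico s e).card : ℝ≥0∞)⁻¹ * ∑ d ∈ Finset.Ico s e,
            ENNReal.ofReal (if t₂ ≤ d then wB t₁ t₂ s d else if d < t₁ then wB t₁ t₂ (d+1) e
              else ((e:ℝ) - s + 1)) := by rw [← Finset.mul_sum]
      _ = ((Finset.Ico s e).card : ℝ≥0∞)⁻¹ * ENNReal.ofReal (∑ d ∈ Finset.Ico s e,
            (if t₂ ≤ d then wB t₁ t₂ s d else if d < t₁ then wB t₁ t₂ (d+1) e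
              else ((e:ℝ) - s + 1))) := by
          rw [ENNReal.ofReal_sum_of_nonneg]
          intro d hdm
          simp only [Finset.mem_Ico] at hdm
          split_ifs with hc1 hc2
          · exact wB_nonneg t₁ t₂ s d hs (by omega) hc1
          · exact wB_nonneg t₁ t₂ (d+1) e (by omega) (by omega) he
          · have : (s:ℝ) ≤ e := by exact_mod_cast (le_of_lt hse)
            linarith
      _ ≤ ((Finset.Ico s e).card : ℝ≥0∞)⁻¹ *
            ENNReal.ofReal (((e:ℝ) - s) * wB t₁ t₂ s e) :=
          mul_le_mul_right (ENNReal.ofReal_le_ofReal (sum_Bd s e t₁ t₂ hs h12 he)) _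
      _ = ENNReal.ofReal (wB t₁ t₂ s e) := by
          rw [Nat.card_Ico]
          rw [ENNReal.ofReal_mul (by
            have : (s:ℝ) ≤ e := by exact_mod_cast (le_of_lt hse)
            linarith)]
          rw [show ENNReal.ofReal ((e:ℝ) - s) = ((e - s : ℕ) : ℝ≥0∞) from by
            rw [← Nat.cast_sub (le_of_lt hse), ENNReal.ofReal_natCast]]
          rw [← mul_assoc, ENNReal.inv_mul_cancel, one_mul]
          · exact_mod_cast (by omega : e - s ≠ 0)
          · exact ENNReal.natCast_ne_top _

/-! ### Main theorem -/

/-- In a random binary partition-tree over `[1, T]`, for any two days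
`t₁ < t₂` in `[T]`, the expected size of the smallest window strictly containing both
`t₁` and `t₂` is at most `(t₂ - t₁ + 1) + 2 (t₂ - t₁ + 2) ln T`,
which is `O((t₂ - t₁) log T)`. -/
theorem expected_smallest_window_size_le
    (T t₁ t₂ : ℕ) (h1 : 1 ≤ t₁) (h12 : t₁ < t₂) (h2T : t₂ ≤ T) :
    ∫ x, (winSize t₁ t₂ x : ℝ) ∂(splitPMF 1 T).toMeasure ≤
      ((t₂ : ℝ) - t₁ + 1) + 2 * ((t₂ : ℝ) - t₁ + 2) * Real.log T := by
  have hT2 : 2 ≤ T := by omega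
  have hDpos : (0:ℝ) ≤ (t₂:ℝ) - t₁ := by
    have : (t₁:ℝ) ≤ t₂ := by exact_mod_cast (le_of_lt h12)
    linarith
  have hTpos : (1:ℝ) ≤ (T:ℝ) := by exact_mod_cast (by omega : 1 ≤ T)
  have hlogT : 0 ≤ Real.log T := Real.log_nonneg hTpos
  apply integral_le_of_pexp_le
  · have h2 : (0:ℝ) ≤ 2 * ((t₂:ℝ) - t₁ + 2) * Real.log T := by
      apply mul_nonneg (by linarith) hlogT
    linarith
  · rw [splitPMF]
    calc pexp (splitPMFAux (T - 1) 1 T) (fun x => (winSize t₁ t₂ x : ℝ≥0∞))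
        ≤ ENNReal.ofReal (wB t₁ t₂ 1 T) :=
          main_bound t₁ t₂ h12 (T - 1) 1 T h1 h2T le_rfl
      _ ≤ ENNReal.ofReal (((t₂ : ℝ) - t₁ + 1) + 2 * ((t₂ : ℝ) - t₁ + 2) * Real.log T) := by
          apply ENNReal.ofReal_le_ofReal
          rw [wB]
          have e1 : (t₁:ℝ) - (1:ℕ) + 1 = (t₁:ℝ) := by push_cast; ring
          rw [e1]
          have hl1 : Real.log (t₁:ℝ) ≤ Real.log T := by
            apply Real.log_le_log (by exact_mod_cast h1)
            exact_mod_cast (by omega : t₁ ≤ T)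
          have hl2 : Real.log ((T:ℝ) - t₂ + 1) ≤ Real.log T := by
            apply Real.log_le_log
            · have : (t₂:ℝ) ≤ T := by exact_mod_cast h2T
              linarith
            · have : (1:ℝ) ≤ (t₂:ℝ) := by exact_mod_cast (by omega : 1 ≤ t₂)
              linarith
          nlinarith [hl1, hl2]
end

section
/- Consider greedy online assignment of t requests on the integer line [T] to free slots (each integer slot holds at most one request), where each request at position p is assigned to the nearest free slot. If there exists a feasible assignment (injective placement) in which every request is placed within error_max of its reported position, then for every position t' and every i in [log_2 T], at most 4*error_max requests cross t' that originate from the segments [t'-2^i, t'] and [t', t'+2^i]; consequently the greedy total displacement satisfies sum_i |assigned_i - reported_i| <= 4*t*error_max*log_2(T) + T*error_max. -/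
/-!
By the layer-cake formula, `∑ⱼ |aⱼ - pⱼ| = ∑_{s ≥ 1} #{j | |aⱼ - pⱼ| ≥ s}`. Fix `s`. A request
displaced by at least `s` found every slot within distance `s` of its origin already occupied.
Pick leaders among these requests greedily in arrival order. The requests arriving from a leader
`ℓ` on and originating within distance `s` of `p ℓ` originate in the maximal run of slots occupied
when `ℓ` arrives; so do the requests already placed in that run, so the feasible assignment leaves
room for at most `2 e` of them. Leaders are `s`-separated and their windows of length `s` are
disjoint and occupied, so there are at most `(t - 1) / s + 1` of them. Hence
`#{j | |aⱼ - pⱼ| ≥ s} ≤ 2 e ((t - 1) / s + 1)`, and summing over `s < t` gives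
`2 e (t - 1) (H_{t-1} + 1) ≤ 4 e (t - 1) log₂ t`.
-/

open Finset

theorem harmonic_add_one_le_two_mul_logb {n : ℕ} (hn : n ≠ 0) :
    (harmonic n : ℝ) + 1 ≤ 2 * Real.logb 2 (n + 1) := by
  have hn1 : (1 : ℝ) ≤ n := by exact_mod_cast Nat.one_le_iff_ne_zero.mpr hn
  have hlog : Real.log n ≤ Real.logb 2 n := by
    rw [Real.logb, le_div_iff₀ (Real.log_pos one_lt_two)]
    exact mul_le_of_le_one_right (Real.log_nonneg hn1) (by linarith [Real.log_two_lt_d9])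
  calc (harmonic n : ℝ) + 1 ≤ Real.logb 2 (2 ^ 2) + Real.logb 2 n := by
        rw [Real.logb_pow, Real.logb_self_eq_one one_lt_two]
        push_cast
        linarith [harmonic_le_one_add_log n]
    _ = Real.logb 2 (4 * n) := by
        rw [← Real.logb_mul (by norm_num) (by positivity)]; norm_num
    _ ≤ Real.logb 2 ((n + 1) ^ 2) :=
        Real.logb_le_logb_of_le one_lt_two (by positivity) (by nlinarith [sq_nonneg ((n : ℝ) - 1)])
    _ = 2 * Real.logb 2 (n + 1) := by rw [Real.logb_pow]; norm_num

theorem Finset.sum_eq_sum_Icc_card_filter_le {ι : Type*} (s : Finset ι) (f : ι → ℕ) {n : ℕ}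
    (hf : ∀ i ∈ s, f i ≤ n) : ∑ i ∈ s, f i = ∑ k ∈ Icc 1 n, #{i ∈ s | k ≤ f i} := by
  calc ∑ i ∈ s, f i = ∑ i ∈ s, #{k ∈ Icc 1 n | k ≤ f i} := by
        refine sum_congr rfl fun i hi => ?_
        have hfi := hf i hi
        have : {k ∈ Icc 1 n | k ≤ f i} = Icc 1 (f i) := by
          ext k; simp only [mem_filter, mem_Icc]; omega
        rw [this, Nat.card_Icc, Nat.add_sub_cancel]
    _ = _ := sum_card_bipartiteAbove_eq_sum_card_bipartiteBelow (fun i k => k ≤ f i)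

theorem Finset.sum_le_two_mul_logb_of_card_le_mul {ι : Type*} (s : Finset ι) (f : ι → ℕ)
    {n : ℕ} {c : ℝ} (hc : 0 ≤ c) (hf : ∀ i ∈ s, f i ≤ n)
    (hcard : ∀ k, 1 ≤ k → (#{i ∈ s | k ≤ f i} : ℝ) * k ≤ c * (n + k)) :
    (∑ i ∈ s, f i : ℝ) ≤ 2 * c * n * Real.logb 2 (n + 1) := by
  have hlayer : (∑ i ∈ s, f i : ℝ) ≤ c * n * (harmonic n + 1) := by
    rw [← Nat.cast_sum, s.sum_eq_sum_Icc_card_filter_le f hf, Nat.cast_sum, harmonic_eq_sum_Icc]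
    push_cast
    calc ∑ k ∈ Icc 1 n, (#{i ∈ s | k ≤ f i} : ℝ)
        ≤ ∑ k ∈ Icc 1 n, (c * n * (k : ℝ)⁻¹ + c) := by
          refine sum_le_sum fun k hk => ?_
          have hk1 := (mem_Icc.mp hk).1
          have hk0 : (0 : ℝ) < k := by exact_mod_cast hk1
          calc (#{i ∈ s | k ≤ f i} : ℝ) ≤ c * (n + k) / k := (le_div_iff₀ hk0).mpr (hcard k hk1)
            _ = c * n * (k : ℝ)⁻¹ + c := by field_simp
      _ = c * n * (∑ k ∈ Icc 1 n, (k : ℝ)⁻¹ + 1) := by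
          rw [sum_add_distrib, ← mul_sum, sum_const, Nat.card_Icc]; push_cast; ring
  rcases eq_or_ne n 0 with rfl | hn
  · simpa using hlayer
  calc (∑ i ∈ s, f i : ℝ) ≤ c * n * (harmonic n + 1) := hlayer
    _ ≤ c * n * (2 * Real.logb 2 (n + 1)) := by
        gcongr; exact harmonic_add_one_le_two_mul_logb hn
    _ = 2 * c * n * Real.logb 2 (n + 1) := by ring

theorem Finset.exists_subset_separated_covering {ι : Type*} [LinearOrder ι] (R : ι → ι → Prop)
    (hR : ∀ i, R i i) (F : Finset ι) :
    ∃ L ⊆ F, (∀ ℓ ∈ L, ∀ ℓ' ∈ L, ℓ < ℓ' → ¬ R ℓ' ℓ) ∧ ∀ j ∈ F, ∃ ℓ ∈ L, ℓ ≤ j ∧ R j ℓ := by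
  classical
  induction F using Finset.strongInduction with
  | H F ih =>
  rcases F.eq_empty_or_nonempty with rfl | hne
  · exact ⟨∅, empty_subset _, by simp, by simp⟩
  set ℓ₀ := F.min' hne
  have hℓ₀ : ℓ₀ ∈ F := F.min'_mem hne
  obtain ⟨L, hLF, hLsep, hLcov⟩ :=
    ih {j ∈ F | ¬ R j ℓ₀} (filter_ssubset.mpr ⟨ℓ₀, hℓ₀, not_not.mpr (hR ℓ₀)⟩)
  refine ⟨insert ℓ₀ L, insert_subset hℓ₀ (hLF.trans (filter_subset _ _)), ?_, ?_⟩
  · have hmin : ∀ ℓ ∈ L, ℓ₀ ≤ ℓ := fun ℓ hℓ => F.min'_le ℓ (mem_filter.mp (hLF hℓ)).1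
    intro ℓ hℓ ℓ' hℓ' hlt
    rcases mem_insert.mp hℓ with rfl | hℓ <;> rcases mem_insert.mp hℓ' with rfl | hℓ'
    · exact absurd hlt (lt_irrefl _)
    · exact (mem_filter.mp (hLF hℓ')).2
    · exact absurd hlt (hmin ℓ hℓ).not_gt
    · exact hLsep ℓ hℓ ℓ' hℓ' hlt
  · intro j hj
    by_cases hjℓ₀ : R j ℓ₀
    · exact ⟨ℓ₀, mem_insert_self _ _, F.min'_le j hj, hjℓ₀⟩
    · obtain ⟨ℓ, hℓ, hle, hR⟩ := hLcov j (mem_filter.mpr ⟨hj, hjℓ₀⟩)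
      exact ⟨ℓ, mem_insert_of_mem hℓ, hle, hR⟩

theorem card_filter_le_of_injective_of_abs_sub_le {ι : Type*} [Fintype ι] {p b : ι → ℤ} {e : ℕ}
    (hb : Function.Injective b) (hbp : ∀ j, |b j - p j| ≤ e) {x y : ℤ} (hxy : x ≤ y) :
    (#{j | x ≤ p j ∧ p j ≤ y} : ℤ) ≤ y - x + 1 + 2 * e := by
  have hmaps : Set.MapsTo b (({j | x ≤ p j ∧ p j ≤ y} : Finset ι) : Set ι)
      (Icc (x - e) (y + e)) := by
    intro j hj
    have := abs_le.mp (hbp j)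
    simp only [mem_coe, mem_filter, mem_univ, true_and, mem_Icc] at hj ⊢
    omega
  have := card_le_card_of_injOn b hmaps hb.injOn
  rw [Int.card_Icc] at this
  omega

theorem pairwiseDisjoint_Ioc_of_le_abs_sub {ι : Type*} {f : ι → ℤ} {s : ℤ} {L : Set ι}
    (hsep : ∀ ℓ ∈ L, ∀ ℓ' ∈ L, ℓ ≠ ℓ' → s ≤ |f ℓ - f ℓ'|) :
    L.PairwiseDisjoint fun ℓ => Ioc (f ℓ - s) (f ℓ) := by
  intro ℓ hℓ ℓ' hℓ' hne
  have := hsep ℓ hℓ ℓ' hℓ' hne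
  refine disjoint_left.mpr fun x hx hx' => ?_
  rw [mem_Ioc] at hx hx'
  cases abs_cases (f ℓ - f ℓ') <;> omega

section Greedy

variable {ι : Type*} [LinearOrder ι] {T : ℕ} {p a : ι → ℤ}

/-- Requests arrive in the order of their indices. -/
def IsGreedy (T : ℕ) (p a : ι → ℤ) : Prop :=
  ∀ (j : ι) (s : ℤ), 1 ≤ s → s ≤ (T : ℤ) → (∀ j' : ι, j' < j → a j' ≠ s) →
    |a j - p j| ≤ |s - p j|

def OccupiedBefore (a : ι → ℤ) (n : ι) (x : ℤ) : Prop := ∃ j < n, a j = x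

theorem OccupiedBefore.mono {n m : ι} {x : ℤ} (h : OccupiedBefore a n x) (hnm : n ≤ m) :
    OccupiedBefore a m x :=
  let ⟨j, hj, hjx⟩ := h; ⟨j, hj.trans_le hnm, hjx⟩

structure IsMaxRun (a : ι → ℤ) (n : ι) (lo hi : ℤ) : Prop where
  occupied : ∀ x, lo ≤ x → x ≤ hi → OccupiedBefore a n x
  not_occupied_pred : ¬ OccupiedBefore a n (lo - 1)
  not_occupied_succ : ¬ OccupiedBefore a n (hi + 1)

theorem exists_isMaxRun (ha : ∀ j, 1 ≤ a j ∧ a j ≤ T) {n : ι} {c : ℤ}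
    (hc : OccupiedBefore a n c) : ∃ lo hi, lo ≤ c ∧ c ≤ hi ∧ IsMaxRun a n lo hi := by
  have hrange : ∀ {x}, OccupiedBefore a n x → 1 ≤ x ∧ x ≤ T := by
    rintro x ⟨j, -, rfl⟩; exact ha j
  obtain ⟨l, ⟨hlc, hl⟩, hlmax⟩ :=
    Int.exists_greatest_of_bdd (P := fun x => x ≤ c ∧ ¬ OccupiedBefore a n x) ⟨c, fun z hz => hz.1⟩
      ⟨0, by have := (hrange hc).1; omega, fun h => by have := (hrange h).1; omega⟩
  obtain ⟨h, ⟨hch, hh⟩, hhmin⟩ :=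
    Int.exists_least_of_bdd (P := fun x => c ≤ x ∧ ¬ OccupiedBefore a n x) ⟨c, fun z hz => hz.1⟩
      ⟨T + 1, by have := (hrange hc).2; omega, fun h => by have := (hrange h).2; omega⟩
  have hlc' : l < c := lt_of_le_of_ne hlc (by rintro rfl; exact hl hc)
  have hch' : c < h := lt_of_le_of_ne hch (by rintro rfl; exact hh hc)
  refine ⟨l + 1, h - 1, by omega, by omega, fun x hlx hxh => ?_, by simpa using hl,
    by simpa using hh⟩
  by_contra hx
  rcases le_total x c with hxc | hcx
  · have := hlmax x ⟨hxc, hx⟩; omega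
  · have := hhmin x ⟨hcx, hx⟩; omega

variable (hg : IsGreedy T p a)
include hg

theorem IsGreedy.occupiedBefore_of_abs_lt {j : ι} {x : ℤ} (hx : 1 ≤ x ∧ x ≤ T)
    (hlt : |x - p j| < |a j - p j|) : OccupiedBefore a j x := by
  by_contra hfree
  exact (hg j x hx.1 hx.2 fun j' hj' hj'x => hfree ⟨j', hj', hj'x⟩).not_gt hlt

variable (hp : ∀ j, 1 ≤ p j ∧ p j ≤ T)
include hp

theorem IsGreedy.card_mul_le_of_separated [Fintype ι] {s : ℤ} (hs : 1 ≤ s) {L : Finset ι}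
    (hL : ∀ ℓ ∈ L, s ≤ |a ℓ - p ℓ|) (hsep : ∀ ℓ ∈ L, ∀ ℓ' ∈ L, ℓ ≠ ℓ' → s ≤ |p ℓ - p ℓ'|) :
    (#L : ℤ) * s ≤ Fintype.card ι - 1 + s := by
  classical
  rcases L.eq_empty_or_nonempty with rfl | hne
  · simp only [card_empty, CharP.cast_eq_zero, zero_mul]; omega
  obtain ⟨ℓ₀, hℓ₀, hmin⟩ := L.exists_min_image p hne
  -- The windows `(p ℓ - s, p ℓ]` of the leaders other than the leftmost one `ℓ₀` are disjoint,
  -- occupied, and avoid the occupied slot `p ℓ₀`.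
  have hwindow : ∀ ℓ ∈ L, ∀ x, p ℓ - s < x → x ≤ p ℓ → p ℓ₀ ≤ x → x ∈ univ.image a := by
    intro ℓ hℓ x hx1 hx2 hx3
    have := hp ℓ; have := hp ℓ₀
    obtain ⟨j, -, rfl⟩ := hg.occupiedBefore_of_abs_lt (j := ℓ) (x := x) (by omega)
      ((abs_lt.mpr ⟨by omega, by omega⟩).trans_le (hL ℓ hℓ))
    exact mem_image_of_mem a (mem_univ j)
  have hfar : ∀ ℓ ∈ L.erase ℓ₀, p ℓ₀ + s ≤ p ℓ := by
    intro ℓ hℓ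
    have hsepℓ := hsep ℓ (mem_of_mem_erase hℓ) ℓ₀ hℓ₀ (ne_of_mem_erase hℓ)
    have := hmin ℓ (mem_of_mem_erase hℓ)
    cases abs_cases (p ℓ - p ℓ₀) <;> omega
  have hsub : (L.erase ℓ₀).biUnion (fun ℓ => Ioc (p ℓ - s) (p ℓ)) ⊆
      (univ.image a).erase (p ℓ₀) := by
    intro x hx
    obtain ⟨ℓ, hℓ, hx⟩ := mem_biUnion.mp hx
    rw [mem_Ioc] at hx
    have := hfar ℓ hℓ
    exact mem_erase.mpr ⟨by omega, hwindow ℓ (mem_of_mem_erase hℓ) x hx.1 hx.2 (by omega)⟩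
  have hdisj : (L.erase ℓ₀ : Set ι).PairwiseDisjoint (fun ℓ => Ioc (p ℓ - s) (p ℓ)) :=
    pairwiseDisjoint_Ioc_of_le_abs_sub fun ℓ hℓ ℓ' hℓ' =>
      hsep ℓ (mem_of_mem_erase hℓ) ℓ' (mem_of_mem_erase hℓ')
  have hlen : ∀ ℓ ∈ L.erase ℓ₀, #(Ioc (p ℓ - s) (p ℓ)) = s.toNat := fun ℓ _ => by
    rw [Int.card_Ioc, sub_sub_cancel]
  have hpℓ₀ := hp ℓ₀
  have hcard := card_le_card hsub
  rw [card_biUnion hdisj, sum_const_nat hlen,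
    card_erase_of_mem (hwindow ℓ₀ hℓ₀ (p ℓ₀) (by omega) le_rfl le_rfl)] at hcard
  have himage : #(univ.image a) ≤ Fintype.card ι := card_image_le
  have hcardℤ : (#(L.erase ℓ₀) : ℤ) * s ≤ Fintype.card ι - 1 := by
    rw [← Int.toNat_of_nonneg (by omega : 0 ≤ s)]
    have := (univ.image a).card_pos.mpr ⟨_, mem_image_of_mem a (mem_univ ℓ₀)⟩
    omega
  rw [← card_erase_add_one hℓ₀]
  push_cast
  linarith

variable (ha : ∀ j, 1 ≤ a j ∧ a j ≤ T)
include ha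

theorem IsGreedy.abs_sub_lt_card [Fintype ι] (j : ι) : |a j - p j| < Fintype.card ι := by
  classical
  have hsub : uIcc (p j) (a j) ⊆ univ.image a := by
    intro x hx
    rw [mem_uIcc] at hx
    rcases eq_or_ne x (a j) with rfl | hne
    · exact mem_image_of_mem a (mem_univ j)
    have := hp j; have := ha j
    obtain ⟨j', -, rfl⟩ := hg.occupiedBefore_of_abs_lt (j := j) (x := x) (by omega)
      (by rw [abs_lt]; cases abs_cases (a j - p j) <;> omega)
    exact mem_image_of_mem a (mem_univ j')
  have := (card_le_card hsub).trans card_image_le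
  rw [Int.card_uIcc, card_univ] at this
  rw [Int.abs_eq_natAbs]
  omega

theorem IsGreedy.mem_Icc_of_isMaxRun {n : ι} {lo hi : ℤ} (hrun : IsMaxRun a n lo hi) {j : ι}
    (hjn : j < n) (hja : lo ≤ a j ∧ a j ≤ hi) : lo ≤ p j ∧ p j ≤ hi := by
  have := hp j; have := ha j
  constructor
  · by_contra! hlt
    refine hrun.not_occupied_pred ((hg.occupiedBefore_of_abs_lt (by omega) ?_).mono hjn.le)
    rw [abs_of_nonneg (by omega), abs_of_pos (by omega)]; omega
  · by_contra! hlt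
    refine hrun.not_occupied_succ ((hg.occupiedBefore_of_abs_lt (by omega) ?_).mono hjn.le)
    rw [abs_of_nonpos (by omega), abs_of_neg (by omega)]; omega

variable {b : ι → ℤ} {e : ℕ} (hb : Function.Injective b) (hbp : ∀ j, |b j - p j| ≤ e)
include hb hbp

theorem IsGreedy.card_late_in_run_le [Fintype ι] {n : ι} {lo hi : ℤ} (hle : lo ≤ hi)
    (hrun : IsMaxRun a n lo hi) : (#{j | n ≤ j ∧ lo ≤ p j ∧ p j ≤ hi} : ℤ) ≤ 2 * e := by
  classical
  set occupants : Finset ι := {j | j < n ∧ lo ≤ a j ∧ a j ≤ hi}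
  set late : Finset ι := {j | n ≤ j ∧ lo ≤ p j ∧ p j ≤ hi}
  have hocc : hi - lo + 1 ≤ (#occupants : ℤ) := by
    have : Icc lo hi ⊆ occupants.image a := by
      intro x hx
      obtain ⟨j, hjn, rfl⟩ := hrun.occupied x (mem_Icc.mp hx).1 (mem_Icc.mp hx).2
      exact mem_image_of_mem a (mem_filter.mpr ⟨mem_univ j, hjn, mem_Icc.mp hx⟩)
    have := (card_le_card this).trans card_image_le
    rw [Int.card_Icc] at this
    omega
  have hunion : occupants ∪ late ⊆ ({j | lo ≤ p j ∧ p j ≤ hi} : Finset ι) := by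
    intro j hj
    simp only [occupants, late, mem_union, mem_filter, mem_univ, true_and] at hj ⊢
    rcases hj with ⟨hjn, hja⟩ | ⟨-, hjp⟩
    · exact hg.mem_Icc_of_isMaxRun hp ha hrun hjn hja
    · exact hjp
  have hdisj : Disjoint occupants late :=
    disjoint_filter.mpr fun j _ hj hj' => hj.1.not_ge hj'.1
  have := card_le_card hunion
  rw [card_union_of_disjoint hdisj] at this
  have := card_filter_le_of_injective_of_abs_sub_le hb hbp hle
  omega

theorem IsGreedy.card_late_near_le [Fintype ι] {ℓ : ι} {s : ℤ} (hs : 1 ≤ s)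
    (hℓ : s ≤ |a ℓ - p ℓ|) : (#{j | ℓ ≤ j ∧ |p j - p ℓ| < s} : ℤ) ≤ 2 * e := by
  have hwindow : ∀ x : ℤ, 1 ≤ x → x ≤ T → |x - p ℓ| < s → OccupiedBefore a ℓ x :=
    fun x h1 h2 hx => hg.occupiedBefore_of_abs_lt ⟨h1, h2⟩ (hx.trans_le hℓ)
  have hpℓ := hp ℓ
  obtain ⟨lo, hi, hlo, hhi, hrun⟩ :=
    exists_isMaxRun ha (hwindow (p ℓ) hpℓ.1 hpℓ.2 (by rwa [sub_self, abs_zero]))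
  have hsub : ({j | ℓ ≤ j ∧ |p j - p ℓ| < s} : Finset ι) ⊆
      ({j | ℓ ≤ j ∧ lo ≤ p j ∧ p j ≤ hi} : Finset ι) := by
    intro j hj
    simp only [mem_filter, mem_univ, true_and] at hj ⊢
    obtain ⟨hℓj, hjs⟩ := hj
    have hpj := hp j
    rw [abs_lt] at hjs
    refine ⟨hℓj, ?_, ?_⟩
    · by_contra! hlt
      exact hrun.not_occupied_pred (hwindow _ (by omega) (by omega) (by rw [abs_lt]; omega))
    · by_contra! hlt
      exact hrun.not_occupied_succ (hwindow _ (by omega) (by omega) (by rw [abs_lt]; omega))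
  exact (Nat.cast_le.mpr (card_le_card hsub)).trans
    (hg.card_late_in_run_le hp ha hb hbp (hlo.trans hhi) hrun)

theorem IsGreedy.card_filter_le_abs_sub_mul_le [Fintype ι] {s : ℤ} (hs : 1 ≤ s) :
    (#{j | s ≤ |a j - p j|} : ℤ) * s ≤ 2 * e * (Fintype.card ι - 1 + s) := by
  classical
  set F : Finset ι := {j | s ≤ |a j - p j|}
  obtain ⟨L, hLF, hLsep, hLcov⟩ := F.exists_subset_separated_covering
    (fun j ℓ => |p j - p ℓ| < s) (fun i => by rw [sub_self, abs_zero]; omega)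
  have hLdisp : ∀ ℓ ∈ L, s ≤ |a ℓ - p ℓ| := fun ℓ hℓ => (mem_filter.mp (hLF hℓ)).2
  have hsep : ∀ ℓ ∈ L, ∀ ℓ' ∈ L, ℓ ≠ ℓ' → s ≤ |p ℓ - p ℓ'| := by
    intro ℓ hℓ ℓ' hℓ' hne
    rcases hne.lt_or_gt with hlt | hlt
    · rw [abs_sub_comm]; exact not_lt.mp (hLsep ℓ hℓ ℓ' hℓ' hlt)
    · exact not_lt.mp (hLsep ℓ' hℓ' ℓ hℓ hlt)
  have hcover : F ⊆ L.biUnion fun ℓ => {j | ℓ ≤ j ∧ |p j - p ℓ| < s} := by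
    intro j hj
    obtain ⟨ℓ, hℓ, hℓj, hjℓ⟩ := hLcov j hj
    exact mem_biUnion.mpr ⟨ℓ, hℓ, mem_filter.mpr ⟨mem_univ j, hℓj, hjℓ⟩⟩
  have hF : (#F : ℤ) ≤ 2 * e * #L := by
    have hnear : ∀ ℓ ∈ L, #{j | ℓ ≤ j ∧ |p j - p ℓ| < s} ≤ 2 * e := fun ℓ hℓ => by
      exact_mod_cast hg.card_late_near_le hp ha hb hbp hs (hLdisp ℓ hℓ)
    have := (card_le_card hcover).trans (card_biUnion_le.trans (sum_le_card_nsmul _ _ _ hnear))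
    rw [smul_eq_mul] at this
    exact_mod_cast this.trans_eq (mul_comm _ _)
  calc (#F : ℤ) * s ≤ 2 * e * #L * s := mul_le_mul_of_nonneg_right hF (by omega)
    _ = 2 * e * (#L * s) := by ring
    _ ≤ 2 * e * (Fintype.card ι - 1 + s) := mul_le_mul_of_nonneg_left
        (hg.card_mul_le_of_separated hp hs hLdisp hsep) (by positivity)

theorem IsGreedy.sum_abs_sub_le [Fintype ι] {n : ℕ} (hn : Fintype.card ι ≤ n + 1) :
    ∑ j, |(a j : ℝ) - p j| ≤ 4 * e * n * Real.logb 2 (n + 1) := by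
  have hf : ∀ j ∈ univ, (a j - p j).natAbs ≤ n := fun j _ => by
    have := hg.abs_sub_lt_card hp ha j
    rw [Int.abs_eq_natAbs] at this
    omega
  have hcard : ∀ k, 1 ≤ k →
      (#{j ∈ univ | k ≤ (a j - p j).natAbs} : ℝ) * k ≤ 2 * e * (n + k) := by
    intro k hk
    have := hg.card_filter_le_abs_sub_mul_le hp ha hb hbp (s := k) (by exact_mod_cast hk)
    simp only [Int.abs_eq_natAbs, Nat.cast_le] at this
    have : (#{j ∈ univ | k ≤ (a j - p j).natAbs} : ℤ) * k ≤ 2 * e * (n + k) := by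
      refine this.trans (mul_le_mul_of_nonneg_left ?_ (by positivity))
      omega
    exact_mod_cast this
  calc ∑ j, |(a j : ℝ) - p j| = ∑ j, ((a j - p j).natAbs : ℝ) := by
        refine sum_congr rfl fun j _ => ?_
        rw [Nat.cast_natAbs, Int.cast_abs, Int.cast_sub]
    _ ≤ 2 * (2 * e) * n * Real.logb 2 (n + 1) :=
        univ.sum_le_two_mul_logb_of_card_le_mul _ (by positivity) hf hcard
    _ = 4 * e * n * Real.logb 2 (n + 1) := by ring

end Greedy

theorem greedy_matching_guarantee_general (T : ℕ) (t : ℕ) (p a : Fin t → ℤ)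
    (hp : ∀ j, 1 ≤ p j ∧ p j ≤ (T : ℤ))
    (ha : ∀ j, 1 ≤ a j ∧ a j ≤ (T : ℤ))
    (hgreedy : ∀ (j : Fin t) (s : ℤ), 1 ≤ s → s ≤ (T : ℤ) →
      (∀ j' : Fin t, j' < j → a j' ≠ s) → |a j - p j| ≤ |s - p j|)
    (errmax : ℤ) (herr : 0 ≤ errmax)
    (hfeas : ∃ b : Fin t → ℤ, Function.Injective b ∧
      (∀ j, 1 ≤ b j ∧ b j ≤ (T : ℤ)) ∧ ∀ j, |b j - p j| ≤ errmax) :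
    (∑ j, (|a j - p j| : ℝ)) ≤
      4 * t * errmax * Real.logb 2 T + T * errmax := by
  obtain ⟨b, hb, hbT, hbp⟩ := hfeas
  lift errmax to ℕ using herr
  have htT : t ≤ T := by
    simpa using card_le_card_of_injOn b (s := univ) (t := Icc 1 (T : ℤ))
      (fun j _ => mem_Icc.mpr (hbT j)) hb.injOn
  push_cast
  rcases t with _ | n
  · simp only [univ_eq_empty, sum_empty, CharP.cast_eq_zero, mul_zero, zero_mul, zero_add]
    positivity
  have hg : IsGreedy T p a := hgreedy
  calc ∑ j, |(a j : ℝ) - p j| ≤ 4 * errmax * n * Real.logb 2 (n + 1) :=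
        hg.sum_abs_sub_le hp ha hb hbp (by simp)
    _ ≤ 4 * errmax * (n + 1) * Real.logb 2 T := by
        have hlog : 0 ≤ Real.logb 2 (n + 1) := Real.logb_nonneg one_lt_two (by simp)
        gcongr
        · linarith
        · exact one_lt_two
        · exact_mod_cast htT
    _ = 4 * ↑(n + 1) * errmax * Real.logb 2 T := by push_cast; ring
    _ ≤ _ := le_add_of_nonneg_right (by positivity)

/-- Greedy online assignment of `t` requests on the integer line `[T]` to
free slots (each integer slot holds at most one request), where each request at reported
position `p j` is assigned to the nearest free slot.  If there exists a feasible
(injective) assignment `b` in which every request is placed within `errmax` of its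
reported position, then the greedy total displacement satisfies
`∑ j |a j - p j| ≤ 4 * t * errmax * log₂ T + T * errmax`. -/
theorem greedy_matching_guarantee (T : ℕ) (t : ℕ) (p a : Fin t → ℤ)
    (hp : ∀ j, 1 ≤ p j ∧ p j ≤ (T : ℤ))
    (ha : ∀ j, 1 ≤ a j ∧ a j ≤ (T : ℤ))
    (hainj : Function.Injective a)
    (hgreedy : ∀ (j : Fin t) (s : ℤ), 1 ≤ s → s ≤ (T : ℤ) →
      (∀ j' : Fin t, j' < j → a j' ≠ s) → |a j - p j| ≤ |s - p j|)
    (errmax : ℤ) (herr : 0 ≤ errmax)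
    (hfeas : ∃ b : Fin t → ℤ, Function.Injective b ∧
      (∀ j, 1 ≤ b j ∧ b j ≤ (T : ℤ)) ∧ ∀ j, |b j - p j| ≤ errmax) :
    (∑ j, (|a j - p j| : ℝ)) ≤
      4 * t * errmax * Real.logb 2 T + T * errmax :=
  greedy_matching_guarantee_general T t p a hp ha hgreedy errmax herr hfeas
end
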